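/- arXiv:1010.3781 — 2 statements merged into one kernel-verified Lean document; each statement's English description precedes it below -/
import Mathlib

section
/- Let p be an odd prime, a ≥ 2, and δ a quadratic non-residue modulo p. Work in the ring R = (ℤ/p^aℤ)[√δ] (i.e., (ℤ/p^aℤ)[x]/(x²-δ)), with trace Tr(u + v√δ) = 2u. An element α ∈ R^× satisfies: p^{a-1} divides Tr(α) but p^a does not divide Tr(α), if and only if α = r(p^{a-1}·c + β√δ) for some unit r ∈ (ℤ/p^aℤ)^×, some β ∈ (ℤ/p^aℤ)^× and some c ∈ (ℤ/p^aℤ)^× — equivalently, if and only if α is a unit multiple (by (ℤ/p^aℤ)^×) of an element of the form p^{a-1} + β√δ with β a unit. -/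
/-!
Write `α = u + v√δ`, so that `Tr α = 2u`. Since `2` is a unit, the trace condition says exactly
that `u = p^{a-1} c` with `c` a unit. Then `p ∣ u`, and `p ∤ v` because `α` is a unit: an
inverse `u' + v'√δ` would give `1 = u u' + δ v v' ≡ 0 mod p`. So `v` is a unit and
`α = c (p^{a-1} + c⁻¹ v √δ)`.
-/

open Polynomial

namespace AdjoinRoot

section QuadraticExtension

variable {K : Type*} [CommRing K] (d : K)

theorem root_X_sq_sub_C_sq : root (X ^ 2 - C d) ^ 2 = algebraMap K _ d := by
  rw [← sub_eq_zero, algebraMap_eq, ← mk_X, ← mk_C, ← map_pow, ← map_sub, mk_self]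

theorem algebraMap_add_algebraMap_mul_root_mul (u v u' v' : K) :
    (algebraMap K (AdjoinRoot (X ^ 2 - C d)) u + algebraMap K _ v * root _) *
        (algebraMap K _ u' + algebraMap K _ v' * root _) =
      algebraMap K _ (u * u' + d * v * v') + algebraMap K _ (u * v' + v * u') * root _ := by
  simp only [map_add, map_mul]
  linear_combination (algebraMap K _ v * algebraMap K _ v') * root_X_sq_sub_C_sq d

variable [Nontrivial K]

noncomputable def quadraticBasis : Module.Basis (Fin 2) K (AdjoinRoot (X ^ 2 - C d)) :=
  (powerBasis' (monic_X_pow_sub_C d two_ne_zero)).basis.reindex (finCongr natDegree_X_pow_sub_C)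

theorem quadraticBasis_apply (i : Fin 2) :
    quadraticBasis d i = root (X ^ 2 - C d) ^ (i : ℕ) := by
  rw [quadraticBasis, Module.Basis.reindex_apply, PowerBasis.basis_eq_pow]
  rfl

theorem quadraticBasis_equivFun (u v : K) :
    (quadraticBasis d).equivFun (algebraMap K _ u + algebraMap K _ v * root _) = ![u, v] := by
  have h : algebraMap K (AdjoinRoot (X ^ 2 - C d)) u + algebraMap K _ v * root _ =
      (quadraticBasis d).equivFun.symm ![u, v] := by
    simp [Module.Basis.equivFun_symm_apply, Fin.sum_univ_two, quadraticBasis_apply,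
      Algebra.smul_def]
  rw [h, LinearEquiv.apply_symm_apply]

theorem exists_eq_algebraMap_add_algebraMap_mul_root (z : AdjoinRoot (X ^ 2 - C d)) :
    ∃ u v : K, z = algebraMap K _ u + algebraMap K _ v * root _ := by
  refine ⟨(quadraticBasis d).equivFun z 0, (quadraticBasis d).equivFun z 1, ?_⟩
  conv_lhs => rw [← (quadraticBasis d).sum_equivFun z]
  simp [Fin.sum_univ_two, quadraticBasis_apply, Algebra.smul_def]

theorem algebraMap_add_algebraMap_mul_root_inj {u v u' v' : K} :
    algebraMap K (AdjoinRoot (X ^ 2 - C d)) u + algebraMap K _ v * root _ =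
        algebraMap K _ u' + algebraMap K _ v' * root _ ↔ u = u' ∧ v = v' := by
  refine ⟨fun h => ?_, fun ⟨hu, hv⟩ => hu ▸ hv ▸ rfl⟩
  have h' := congrArg (quadraticBasis d).equivFun h
  rw [quadraticBasis_equivFun, quadraticBasis_equivFun] at h'
  simpa using h'

theorem trace_root : Algebra.trace K _ (root (X ^ 2 - C d)) = 0 := by
  classical
  have h0 : root (X ^ 2 - C d) * quadraticBasis d 0 =
      algebraMap K _ 0 + algebraMap K _ 1 * root _ := by
    simp [quadraticBasis_apply]
  have h1 : root (X ^ 2 - C d) * quadraticBasis d 1 =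
      algebraMap K _ d + algebraMap K _ 0 * root _ := by
    simp [quadraticBasis_apply, ← sq, root_X_sq_sub_C_sq]
  rw [Algebra.trace_eq_matrix_trace (quadraticBasis d), Matrix.trace, Fin.sum_univ_two,
    Matrix.diag_apply, Matrix.diag_apply, Algebra.leftMulMatrix_eq_repr_mul,
    Algebra.leftMulMatrix_eq_repr_mul, ← Module.Basis.equivFun_apply,
    ← Module.Basis.equivFun_apply, h0, h1, quadraticBasis_equivFun, quadraticBasis_equivFun]
  simp

theorem trace_algebraMap_add_algebraMap_mul_root (u v : K) :
    Algebra.trace K _ (algebraMap K (AdjoinRoot (X ^ 2 - C d)) u + algebraMap K _ v * root _) =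
      2 * u := by
  rw [map_add, Algebra.trace_algebraMap_of_basis (quadraticBasis d), ← Algebra.smul_def,
    map_smul, trace_root]
  simp [two_mul]

theorem not_isUnit_algebraMap_add_algebraMap_mul_root {π u v : K} (hπ : ¬IsUnit π)
    (hu : π ∣ u) (hv : π ∣ v) :
    ¬IsUnit (algebraMap K (AdjoinRoot (X ^ 2 - C d)) u + algebraMap K _ v * root _) := by
  rintro ⟨w, hw⟩
  obtain ⟨u', v', hw'⟩ := exists_eq_algebraMap_add_algebraMap_mul_root d ↑w⁻¹
  have h := w.mul_inv
  rw [hw, hw', algebraMap_add_algebraMap_mul_root_mul, ← map_one (algebraMap K _), ← add_zero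
    (algebraMap K (AdjoinRoot (X ^ 2 - C d)) 1), ← zero_mul (root (X ^ 2 - C d)),
    ← map_zero (algebraMap K _), algebraMap_add_algebraMap_mul_root_inj] at h
  exact hπ (isUnit_of_dvd_one (h.1 ▸ dvd_add (hu.mul_right u') ((hv.mul_left d).mul_right v')))

end QuadraticExtension
end AdjoinRoot

namespace ZMod

variable {p a : ℕ}

theorem natCast_pow_self_eq_zero : (p : ZMod (p ^ a)) ^ a = 0 := by
  rw [← Nat.cast_pow, natCast_self]

theorem natCast_pow_pred_ne_zero (hp : p.Prime) (ha : 0 < a) :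
    (p : ZMod (p ^ a)) ^ (a - 1) ≠ 0 := by
  rw [← Nat.cast_pow, Ne, natCast_eq_zero_iff, Nat.pow_dvd_pow_iff_le_right hp.one_lt]
  omega

theorem natCast_dvd_of_not_isUnit [NeZero (p ^ a)] (hp : p.Prime) (ha : 0 < a)
    {x : ZMod (p ^ a)} (hx : ¬IsUnit x) : (p : ZMod (p ^ a)) ∣ x := by
  rw [← natCast_zmod_val x, isUnit_natCast_iff_not_dvd_pow hp ha, not_not] at hx
  rw [← natCast_zmod_val x]
  exact Nat.cast_dvd_cast hx

theorem isUnit_two (hp : p.Prime) (hp2 : p ≠ 2) (ha : 0 < a) : IsUnit (2 : ZMod (p ^ a)) := by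
  rw [← Nat.cast_ofNat, isUnit_natCast_iff_not_dvd_pow hp ha,
    Nat.prime_dvd_prime_iff_eq hp Nat.prime_two]
  exact hp2

theorem pow_pred_dvd_and_ne_zero_iff [NeZero (p ^ a)] (hp : p.Prime) (ha : 0 < a)
    (x : ZMod (p ^ a)) :
    (p : ZMod (p ^ a)) ^ (a - 1) ∣ x ∧ x ≠ 0 ↔ ∃ c : (ZMod (p ^ a))ˣ, x = p ^ (a - 1) * c := by
  constructor
  · rintro ⟨⟨c, rfl⟩, hx⟩
    have hc : IsUnit c := by
      by_contra hc
      obtain ⟨m, rfl⟩ := natCast_dvd_of_not_isUnit hp ha hc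
      rw [← mul_assoc, ← pow_succ, Nat.sub_add_cancel ha, natCast_pow_self_eq_zero,
        zero_mul] at hx
      exact hx rfl
    exact ⟨hc.unit, rfl⟩
  · rintro ⟨c, rfl⟩
    exact ⟨dvd_mul_right _ _, c.isUnit.mul_left_eq_zero.not.mpr (natCast_pow_pred_ne_zero hp ha)⟩

end ZMod

open AdjoinRoot

open Polynomial in
theorem stmt_6_general (p a : ℕ) [NeZero (p ^ a)] (hp : p.Prime) (hp2 : p ≠ 2)
    (ha : 2 ≤ a) (δ : ℤ)
    (α : (AdjoinRoot (X ^ 2 - C ((δ : ZMod (p ^ a))) : (ZMod (p ^ a))[X]))ˣ) :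
    ((p : ZMod (p ^ a)) ^ (a - 1) ∣
        Algebra.trace (ZMod (p ^ a)) _ (α : AdjoinRoot (X ^ 2 - C ((δ : ZMod (p ^ a)))))
      ∧ ¬ (p : ZMod (p ^ a)) ^ a ∣
        Algebra.trace (ZMod (p ^ a)) _ (α : AdjoinRoot (X ^ 2 - C ((δ : ZMod (p ^ a)))))) ↔
    (∃ r β : (ZMod (p ^ a))ˣ,
      (α : AdjoinRoot (X ^ 2 - C ((δ : ZMod (p ^ a))))) =
        algebraMap _ _ (r : ZMod (p ^ a)) *
          ((p : AdjoinRoot (X ^ 2 - C ((δ : ZMod (p ^ a))))) ^ (a - 1) +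
            algebraMap _ _ (β : ZMod (p ^ a)) * AdjoinRoot.root _)) := by
  have ha0 : 0 < a := by omega
  have : Fact (1 < p ^ a) := ⟨Nat.one_lt_pow ha0.ne' hp.one_lt⟩
  obtain ⟨u, v, hα⟩ := exists_eq_algebraMap_add_algebraMap_mul_root _ α.val
  have hscale (r β : ZMod (p ^ a)) :
      algebraMap _ (AdjoinRoot (X ^ 2 - C ((δ : ZMod (p ^ a))))) r *
          ((p : AdjoinRoot _) ^ (a - 1) + algebraMap _ _ β * root _) =
        algebraMap _ _ (r * p ^ (a - 1)) + algebraMap _ _ (r * β) * root _ := by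
    simp only [map_mul, map_pow, map_natCast]
    ring
  simp only [hα, hscale, algebraMap_add_algebraMap_mul_root_inj,
    trace_algebraMap_add_algebraMap_mul_root, ZMod.natCast_pow_self_eq_zero, zero_dvd_iff,
    (ZMod.isUnit_two hp hp2 ha0).dvd_mul_left]
  rw [← ne_eq, ZMod.pow_pred_dvd_and_ne_zero_iff hp ha0]
  constructor
  · rintro ⟨c, rfl⟩
    have hv : IsUnit v := by
      by_contra hv
      refine not_isUnit_algebraMap_add_algebraMap_mul_root _
        (ZMod.prime_natCast_not_isUnit_pow hp ha0) ?_ (ZMod.natCast_dvd_of_not_isUnit hp ha0 hv)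
        (hα ▸ α.isUnit)
      exact (dvd_pow_self _ (by omega)).mul_right _
    exact ⟨c, c⁻¹ * hv.unit, mul_comm _ _, by simp⟩
  · rintro ⟨r, β, hu, -⟩
    exact ⟨r, hu.trans (mul_comm _ _)⟩

open Polynomial in
/-- In `R = (ℤ/p^aℤ)[√δ]` (`p` odd prime, `a ≥ 2`, `δ` a non-residue mod `p`),
a unit `α` has trace exactly divisible by `p^{a-1}` if and only if `α` is a
`(ℤ/p^aℤ)ˣ`-multiple of an element `p^{a-1} + β√δ` with `β` a unit. -/
theorem stmt_6 (p a : ℕ) [NeZero (p ^ a)] (hp : p.Prime) (hp2 : p ≠ 2)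
    (ha : 2 ≤ a) (δ : ℤ) (hδ : ¬ IsSquare ((δ : ZMod p)))
    (α : (AdjoinRoot (X ^ 2 - C ((δ : ZMod (p ^ a))) : (ZMod (p ^ a))[X]))ˣ) :
    ((p : ZMod (p ^ a)) ^ (a - 1) ∣
        Algebra.trace (ZMod (p ^ a)) _ (α : AdjoinRoot (X ^ 2 - C ((δ : ZMod (p ^ a)))))
      ∧ ¬ (p : ZMod (p ^ a)) ^ a ∣
        Algebra.trace (ZMod (p ^ a)) _ (α : AdjoinRoot (X ^ 2 - C ((δ : ZMod (p ^ a)))))) ↔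
    (∃ r β : (ZMod (p ^ a))ˣ,
      (α : AdjoinRoot (X ^ 2 - C ((δ : ZMod (p ^ a))))) =
        algebraMap _ _ (r : ZMod (p ^ a)) *
          ((p : AdjoinRoot (X ^ 2 - C ((δ : ZMod (p ^ a))))) ^ (a - 1) +
            algebraMap _ _ (β : ZMod (p ^ a)) * AdjoinRoot.root _)) :=
  stmt_6_general p a hp hp2 ha δ α
end

section
/- Let p be an odd prime. Up to isomorphism, there are exactly three quadratic field extensions of ℚ_p, namely ℚ_p(√u), ℚ_p(√p), and ℚ_p(√(up)) where u is any unit of ℤ_p that is not a square; equivalently, ℚ_p^×/(ℚ_p^×)² has order 4. -/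
/-!
Write `x ∈ ℚ_pˣ` as `x = u * p ^ v` with `u ∈ ℤ_pˣ`. Then `x ↦ (v mod 2, (ū / p))`, where `ū` is
the residue of `u` in `𝔽_p`, is a homomorphism onto `ℤ/2 × {±1}`, and its kernel is exactly the
squares: if `v` is even and `ū` is a square, Hensel's lemma lifts a square root of `ū` to `ℤ_p`,
because for `p ≠ 2` the derivative `2a` of `X ^ 2 - u` at a residue root `a` is a unit.
-/

open Polynomial

theorem quadraticChar_toUnitHom_surjective {F : Type*} [Field F] [Fintype F] [DecidableEq F]
    (hF : ringChar F ≠ 2) : Function.Surjective (quadraticChar F).toUnitHom := by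
  intro b
  rcases Int.units_eq_one_or b with rfl | rfl
  · exact ⟨1, map_one _⟩
  obtain ⟨a, ha⟩ := quadraticChar_exists_neg_one hF
  have ha0 : a ≠ 0 := by rintro rfl; simp at ha
  exact ⟨Units.mk0 a ha0, Units.ext (by simp [ha])⟩

namespace PadicInt

variable {p : ℕ} [Fact p.Prime]

theorem isUnit_iff_toZMod_ne_zero {x : ℤ_[p]} : IsUnit x ↔ toZMod x ≠ 0 := by
  rw [← IsLocalRing.notMem_maximalIdeal, ← ker_toZMod, RingHom.mem_ker]

theorem isSquare_of_isSquare_toZMod (hp : p ≠ 2) {x : ℤ_[p]} (hx : toZMod x ≠ 0)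
    (hsq : IsSquare (toZMod x)) : IsSquare x := by
  obtain ⟨r, hr⟩ := hsq
  obtain ⟨a, rfl⟩ := ZMod.ringHom_surjective toZMod r
  have hroot : ‖aeval a (X ^ 2 - C x)‖ < 1 := by
    rw [← not_isUnit_iff, isUnit_iff_toZMod_ne_zero, not_not]
    simp [hr, sq]
  have hderiv : ‖aeval a (derivative (X ^ 2 - C x))‖ = 1 := by
    rw [← isUnit_iff, isUnit_iff_toZMod_ne_zero]
    have h2 : (2 : ZMod p) ≠ 0 := Ring.two_ne_zero (by rwa [ZMod.ringChar_zmod_n])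
    have ha : toZMod a ≠ 0 := fun h ↦ hx (by rw [hr, h, zero_mul])
    simp only [derivative_sub, derivative_X_pow, derivative_C, sub_zero, map_mul, map_natCast,
      aeval_X, map_pow]
    exact mul_ne_zero (by exact_mod_cast h2) (pow_ne_zero _ ha)
  obtain ⟨z, hz, -⟩ := hensels_lemma (F := X ^ 2 - C x) (a := a) (by rwa [hderiv, one_pow])
  exact ⟨z, by simpa [sub_eq_zero, sq, eq_comm] using hz⟩

theorem isSquare_units_of_isSquare_toZMod (hp : p ≠ 2) (u : ℤ_[p]ˣ)
    (hsq : IsSquare (toZMod (u : ℤ_[p]))) : IsSquare u := by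
  obtain ⟨z, hz⟩ := isSquare_of_isSquare_toZMod hp (isUnit_iff_toZMod_ne_zero.mp u.isUnit) hsq
  have hzu : IsUnit z := isUnit_of_mul_isUnit_left (hz ▸ u.isUnit)
  exact ⟨hzu.unit, Units.ext hz⟩

noncomputable abbrev unitsToZMod : ℤ_[p]ˣ →* (ZMod p)ˣ :=
  Units.map (toZMod (p := p) : ℤ_[p] →* ZMod p)

theorem unitsToZMod_surjective : Function.Surjective (unitsToZMod (p := p)) :=
  IsLocalRing.surjective_units_map_of_local_ringHom toZMod (ZMod.ringHom_surjective _) inferInstance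

@[simp]
lemma valuation_units (u : ℤ_[p]ˣ) : (u : ℤ_[p]).valuation = 0 := by
  have h := valuation_mul u.ne_zero u⁻¹.ne_zero
  rw [Units.mul_inv, valuation_one] at h
  omega

end PadicInt

namespace Padic

variable {p : ℕ} [Fact p.Prime]

lemma p_ne_zero : (p : ℚ_[p]) ≠ 0 := by exact_mod_cast (Fact.out : p.Prime).ne_zero

lemma norm_mul_p_zpow_neg_valuation {x : ℚ_[p]} (hx : x ≠ 0) :
    ‖x * (p : ℚ_[p]) ^ (-x.valuation)‖ = 1 := by
  have hp : (p : ℝ) ≠ 0 := by exact_mod_cast (Fact.out : p.Prime).ne_zero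
  rw [norm_mul, norm_p_zpow, norm_eq_zpow_neg_valuation hx, ← zpow_add₀ hp, neg_neg,
    neg_add_cancel, zpow_zero]

noncomputable abbrev unitsCoe : ℤ_[p]ˣ →* ℚ_[p]ˣ :=
  Units.map (algebraMap ℤ_[p] ℚ_[p] : ℤ_[p] →* ℚ_[p])

noncomputable def unitPart : ℚ_[p]ˣ →* ℤ_[p]ˣ where
  toFun x := PadicInt.mkUnits (norm_mul_p_zpow_neg_valuation x.ne_zero)
  map_one' := Units.ext <| PadicInt.ext <| by simp
  map_mul' x y := by
    refine Units.ext <| PadicInt.ext ?_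
    simp only [Units.val_mul, PadicInt.coe_mul, PadicInt.mkUnits_eq]
    rw [valuation_mul x.ne_zero y.ne_zero, neg_add, zpow_add₀ p_ne_zero]
    ring

lemma coe_unitPart (x : ℚ_[p]ˣ) :
    ((unitPart x : ℤ_[p]) : ℚ_[p]) = x * (p : ℚ_[p]) ^ (-(x : ℚ_[p]).valuation) :=
  rfl

noncomputable def valuationHom : ℚ_[p]ˣ →* Multiplicative ℤ where
  toFun x := .ofAdd (x : ℚ_[p]).valuation
  map_one' := by simp
  map_mul' x y := by simp [valuation_mul x.ne_zero y.ne_zero, ofAdd_add]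

noncomputable def pUnit : ℚ_[p]ˣ := Units.mk0 p p_ne_zero

lemma eq_unitsCoe_unitPart_mul_zpow (x : ℚ_[p]ˣ) :
    x = unitsCoe (unitPart x) * pUnit ^ (x : ℚ_[p]).valuation := by
  ext
  simp [coe_unitPart, pUnit, inv_mul_cancel_right₀ (zpow_ne_zero _ p_ne_zero)]

lemma unitPart_pUnit : unitPart (pUnit : ℚ_[p]ˣ) = 1 := by
  refine Units.ext <| PadicInt.ext ?_
  simp [coe_unitPart, pUnit]

lemma unitPart_unitsCoe (u : ℤ_[p]ˣ) : unitPart (unitsCoe u) = u := by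
  refine Units.ext <| PadicInt.ext ?_
  simp [coe_unitPart]

variable (p) in
noncomputable def squareClassHom : ℚ_[p]ˣ →* Multiplicative (ZMod 2) × ℤˣ :=
  ((AddMonoidHom.toMultiplicative (Int.castAddHom (ZMod 2))).comp valuationHom).prod
    ((quadraticChar (ZMod p)).toUnitHom.comp (PadicInt.unitsToZMod.comp unitPart))

lemma squareClassHom_apply (x : ℚ_[p]ˣ) :
    squareClassHom p x = (.ofAdd ((x : ℚ_[p]).valuation : ZMod 2),
      (quadraticChar (ZMod p)).toUnitHom (PadicInt.unitsToZMod (unitPart x))) :=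
  rfl

theorem ker_squareClassHom (hp : p ≠ 2) :
    (squareClassHom p).ker = (powMonoidHom 2 : ℚ_[p]ˣ →* ℚ_[p]ˣ).range := by
  refine le_antisymm (fun x hx ↦ ?_) ?_
  · rw [MonoidHom.mem_ker, squareClassHom_apply, Prod.mk_eq_one] at hx
    obtain ⟨k, hk⟩ : Even (x : ℚ_[p]).valuation := by
      simpa [← ZMod.intCast_eq_zero_iff_even] using hx.1
    have hsq : IsSquare (PadicInt.toZMod (unitPart x : ℤ_[p])) := by
      rw [← quadraticChar_one_iff_isSquare
        (PadicInt.isUnit_iff_toZMod_ne_zero.mp (unitPart x).isUnit)]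
      simpa [Units.ext_iff, MulChar.coe_toUnitHom, PadicInt.unitsToZMod] using hx.2
    obtain ⟨z, hz⟩ := PadicInt.isSquare_units_of_isSquare_toZMod hp _ hsq
    refine ⟨unitsCoe z * pUnit ^ k, ?_⟩
    rw [eq_unitsCoe_unitPart_mul_zpow x, hz, hk, powMonoidHom_apply, map_mul, mul_pow, sq, sq,
      zpow_add]
  · rintro _ ⟨y, rfl⟩
    rw [MonoidHom.mem_ker, powMonoidHom_apply, map_pow]
    exact (by decide : ∀ t : Multiplicative (ZMod 2) × ℤˣ, t ^ 2 = 1) _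

lemma squareClassHom_pUnit : squareClassHom p pUnit = (.ofAdd 1, 1) := by
  rw [squareClassHom_apply, unitPart_pUnit]
  simp [pUnit]

lemma squareClassHom_unitsCoe (u : ℤ_[p]ˣ) :
    squareClassHom p (unitsCoe u) =
      (1, (quadraticChar (ZMod p)).toUnitHom (PadicInt.unitsToZMod u)) := by
  simp [squareClassHom_apply, unitPart_unitsCoe]

theorem squareClassHom_surjective (hp : p ≠ 2) : Function.Surjective (squareClassHom p) := by
  rintro ⟨a, b⟩
  obtain ⟨c, rfl⟩ :=
    quadraticChar_toUnitHom_surjective (F := ZMod p) (by rwa [ZMod.ringChar_zmod_n]) b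
  obtain ⟨u, rfl⟩ := PadicInt.unitsToZMod_surjective c
  rcases (by decide : ∀ a : Multiplicative (ZMod 2), a = 1 ∨ a = .ofAdd 1) a with rfl | rfl
  · exact ⟨_, squareClassHom_unitsCoe u⟩
  · refine ⟨pUnit * unitsCoe u, ?_⟩
    rw [map_mul, squareClassHom_pUnit, squareClassHom_unitsCoe, Prod.mk_mul_mk, mul_one, one_mul]

end Padic

/-- For an odd prime `p`, the square-class group `ℚ_p^×/(ℚ_p^×)²` has order 4
(equivalently, `ℚ_p` has exactly three quadratic extensions up to isomorphism). -/
theorem stmt_8 (p : ℕ) [Fact p.Prime] (hp2 : p ≠ 2) :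
    Nat.card (ℚ_[p]ˣ ⧸ (powMonoidHom 2 : ℚ_[p]ˣ →* ℚ_[p]ˣ).range) = 4 := by
  rw [← Padic.ker_squareClassHom hp2, Nat.card_congr (QuotientGroup.quotientKerEquivOfSurjective _
    (Padic.squareClassHom_surjective hp2)).toEquiv]
  simp
end
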